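/- Let r = (r¹,r²,r³) be a C¹ solution of the diagonalized drift flux system (S) on an open set U ⊆ ℝ², and write V³ := r¹+r². Then ∂_t(e^{r¹−r²}(x − V³ t)) + ∂_x(e^{r¹−r²}(V³(x − V³ t) − t)) = 0 on U, i.e., the pair (e^{r¹−r²}(x − V³t), e^{r¹−r²}(V³(x − V³t) − t)) is a conserved current of (S). -/

import Mathlib

/- STATEMENT 15: the pair (e^{r¹−r²}(x − V³t), e^{r¹−r²}(V³(x − V³t) − t)) is a
conserved current of the diagonalized drift flux system (S). -/

noncomputable section

/-- Partial derivative with respect to the first ("time") variable. -/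
def pt (f : ℝ × ℝ → ℝ) (p : ℝ × ℝ) : ℝ := fderiv ℝ f p (1, 0)

/-- Partial derivative with respect to the second ("space") variable. -/
def px (f : ℝ × ℝ → ℝ) (p : ℝ × ℝ) : ℝ := fderiv ℝ f p (0, 1)

theorem generating_conserved_current
    (U : Set (ℝ × ℝ)) (hU : IsOpen U)
    (r₁ r₂ r₃ : ℝ × ℝ → ℝ)
    (hr₁ : ContDiffOn ℝ 1 r₁ U) (hr₂ : ContDiffOn ℝ 1 r₂ U)
    (hr₃ : ContDiffOn ℝ 1 r₃ U)
    (hS₁ : ∀ p ∈ U, pt r₁ p + (r₁ p + r₂ p + 1) * px r₁ p = 0)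
    (hS₂ : ∀ p ∈ U, pt r₂ p + (r₁ p + r₂ p - 1) * px r₂ p = 0)
    (hS₃ : ∀ p ∈ U, pt r₃ p + (r₁ p + r₂ p) * px r₃ p = 0) :
    ∀ p ∈ U,
      pt (fun q => Real.exp (r₁ q - r₂ q) * (q.2 - (r₁ q + r₂ q) * q.1)) p
        + px (fun q => Real.exp (r₁ q - r₂ q) *
            ((r₁ q + r₂ q) * (q.2 - (r₁ q + r₂ q) * q.1) - q.1)) p = 0 := by
  intro p hp
  have hpnhds : U ∈ nhds p := hU.mem_nhds hp
  have hDa : HasFDerivAt r₁ (fderiv ℝ r₁ p) p :=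
    (((hr₁.differentiableOn one_ne_zero).differentiableAt hpnhds)).hasFDerivAt
  have hDb : HasFDerivAt r₂ (fderiv ℝ r₂ p) p :=
    (((hr₂.differentiableOn one_ne_zero).differentiableAt hpnhds)).hasFDerivAt
  have hT : HasFDerivAt (fun q : ℝ × ℝ => q.1) (ContinuousLinearMap.fst ℝ ℝ ℝ) p :=
    hasFDerivAt_fst
  have hX : HasFDerivAt (fun q : ℝ × ℝ => q.2) (ContinuousLinearMap.snd ℝ ℝ ℝ) p :=
    hasFDerivAt_snd
  have hE := (hDa.sub hDb).exp
  have hV := hDa.add hDb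
  have h1 := hX.sub (hV.mul hT)
  have hρ := hE.mul h1
  have hflux := hE.mul ((hV.mul h1).sub hT)
  have e1 := hS₁ p hp
  have e2 := hS₂ p hp
  simp only [pt, px] at e1 e2 ⊢
  rw [HasFDerivAt.fderiv (f := fun q : ℝ × ℝ => Real.exp (r₁ q - r₂ q) * (q.2 - (r₁ q + r₂ q) * q.1)) hρ,
    HasFDerivAt.fderiv (f := fun q : ℝ × ℝ => Real.exp (r₁ q - r₂ q) *
      ((r₁ q + r₂ q) * (q.2 - (r₁ q + r₂ q) * q.1) - q.1)) hflux]
  simp only [ContinuousLinearMap.add_apply, ContinuousLinearMap.sub_apply,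
    ContinuousLinearMap.smul_apply, ContinuousLinearMap.coe_fst',
    ContinuousLinearMap.coe_snd', smul_eq_mul, Pi.add_apply, Pi.sub_apply, Pi.mul_apply] at *
  linear_combination
    (Real.exp (r₁ p - r₂ p) * ((p.2 - (r₁ p + r₂ p) * p.1) - p.1)) * e1 +
    (Real.exp (r₁ p - r₂ p) * (-(p.2 - (r₁ p + r₂ p) * p.1) - p.1)) * e2

end
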